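/- arXiv:1602.05287 — 2 statements merged into one kernel-verified Lean document; each statement's English description precedes it below -/
import Mathlib

section
/- Let C₃ be a finite set, S a finite subset of an abelian group G, and e : C₃ → G a map. For c ∈ C₃ define B_c = {s ∈ S : ∃ c' ∈ C₃, c' ≠ c, ∃ s' ∈ S, s' + e(c') = s + e(c)} (the 'confusable' part of S for codeword c). Then |⋃_{c ∈ C₃} (S + e(c))| ≥ |S| · |C₃| − Σ_{c ∈ C₃} |B_c|. -/
/-!
A point `s ∈ S` is unconfused for `c` when `s + e c` lies in no other translate `S + e c'`. The
unconfused points of the translates `S + e c` are pairwise disjoint subsets of the union, and there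
are `|S| - |B_c|` of them in `S + e c`; summing over `c` gives the bound. Translation enters only
through its injectivity, so the argument is carried out for any family of injective maps.
-/

open Finset
open scoped Classical

section Confusion

variable {ι α β : Type*} (S : Finset α) (f : ι → α → β)

noncomputable def unconfused (i : ι) : Finset α :=
  S.filter fun s => ¬ ∃ j, j ≠ i ∧ ∃ s' ∈ S, f j s' = f i s

lemma unconfused_subset (i : ι) : unconfused S f i ⊆ S :=
  filter_subset _ _

lemma pairwiseDisjoint_image_unconfused [DecidableEq β] (I : Set ι) :
    I.PairwiseDisjoint fun i => (unconfused S f i).image (f i) := by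
  intro i _ j _ hij
  simp only [Function.onFun, disjoint_left, mem_image, unconfused, mem_filter]
  rintro _ ⟨s, ⟨-, hs⟩, rfl⟩ ⟨t, ⟨ht, -⟩, hts⟩
  exact hs ⟨j, hij.symm, t, ht, hts⟩

lemma sum_card_unconfused_le_card_biUnion [DecidableEq β] [Fintype ι]
    (hf : ∀ i, Function.Injective (f i)) :
    ∑ i, #(unconfused S f i) ≤ #(univ.biUnion fun i => S.image (f i)) :=
  calc ∑ i, #(unconfused S f i)
      = ∑ i, #((unconfused S f i).image (f i)) :=
        sum_congr rfl fun i _ => (card_image_of_injective _ (hf i)).symm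
    _ = #(univ.biUnion fun i => (unconfused S f i).image (f i)) :=
        (card_biUnion (pairwiseDisjoint_image_unconfused S f _)).symm
    _ ≤ #(univ.biUnion fun i => S.image (f i)) :=
        card_le_card (biUnion_mono fun i _ => image_subset_image (unconfused_subset S f i))

end Confusion

theorem union_translates_card_lower_bound {C G : Type*} [Fintype C] [AddCommGroup G]
    [DecidableEq G] (S : Finset G) (e : C → G) :
    ((S.card * Fintype.card C : ℤ) -
        ∑ c : C, ((S.filter (fun s => ∃ c' : C, c' ≠ c ∧ ∃ s' ∈ S, s' + e c' = s + e c)).card : ℤ))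
      ≤ ((Finset.univ.biUnion (fun c : C => S.image (· + e c))).card : ℤ) := by
  have hsplit (c : C) : (#(unconfused S (fun c s => s + e c) c) : ℤ)
      = #S - #(S.filter fun s => ∃ c', c' ≠ c ∧ ∃ s' ∈ S, s' + e c' = s + e c) := by
    rw [← card_filter_add_card_filter_not (s := S)
      fun s => ∃ c', c' ≠ c ∧ ∃ s' ∈ S, s' + e c' = s + e c]
    push_cast [unconfused]
    ring
  calc (#S * Fintype.card C : ℤ) -
        ∑ c, (#(S.filter fun s => ∃ c', c' ≠ c ∧ ∃ s' ∈ S, s' + e c' = s + e c) : ℤ)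
      = ∑ c, (#(unconfused S (fun c s => s + e c) c) : ℤ) := by
        simp only [hsplit, sum_sub_distrib, sum_const, card_univ, nsmul_eq_mul]
        ring
    _ ≤ #(univ.biUnion fun c => S.image (· + e c)) := by
        exact_mod_cast sum_card_unconfused_le_card_biUnion S _ fun c => add_left_injective (e c)
end

section
/- There exist independent random variables V₁, V₂ taking values in ZMod 3 such that H(V₁ + V₂) > H(2·V₁ + V₂), where addition and scalar multiplication are in ZMod 3 and H denotes Shannon entropy. Concretely, this holds for V₁ with P(V₁ = 2) = 2/3, P(V₁ = 0) = 1/3 and V₂ with P(V₂ = 1) = 2/3, P(V₂ = 0) = 1/3. -/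
open Real Finset

/-!
The law of `V₁ + V₂` is `(5/9, 2/9, 2/9)` and that of `2 • V₁ + V₂` is `(1/9, 4/9, 4/9)`. Both are
ninths of integer weights summing to `9`, so the `log 9` contributions to the two entropies cancel
and the gap is `(12 log 2 - 5 log 5) / 9`, which is positive because `5 ^ 5 = 3125 < 4096 = 2 ^ 12`.
-/

lemma ZMod.sum_univ_three {M : Type*} [AddCommMonoid M] (f : ZMod 3 → M) :
    ∑ x, f x = f 0 + f 1 + f 2 :=
  Fin.sum_univ_three f

lemma ZMod.eq_zero_or_one_or_two (x : ZMod 3) : x = 0 ∨ x = 1 ∨ x = 2 := by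
  revert x; decide

-- `ZMod 3` is definitionally `Fin 3`, so a vector `![p₀, p₁, p₂]` is a function on it.
def ternaryLaw (p₀ p₁ p₂ : ℝ) : ZMod 3 → ℝ := ![p₀, p₁, p₂]

lemma ternaryLaw_nonneg {p₀ p₁ p₂ : ℝ} (h₀ : 0 ≤ p₀) (h₁ : 0 ≤ p₁) (h₂ : 0 ≤ p₂) (x : ZMod 3) :
    0 ≤ ternaryLaw p₀ p₁ p₂ x := by
  obtain rfl | rfl | rfl := ZMod.eq_zero_or_one_or_two x <;> assumption

section ternaryLaw

variable (p₀ p₁ p₂ : ℝ)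

lemma ternaryLaw_apply (x : ZMod 3) :
    ternaryLaw p₀ p₁ p₂ x = if x = 0 then p₀ else if x = 1 then p₁ else p₂ := by
  obtain rfl | rfl | rfl := ZMod.eq_zero_or_one_or_two x <;> rfl

lemma sum_ternaryLaw : ∑ x, ternaryLaw p₀ p₁ p₂ x = p₀ + p₁ + p₂ :=
  ZMod.sum_univ_three _

lemma sum_negMulLog_ternaryLaw :
    ∑ x, negMulLog (ternaryLaw p₀ p₁ p₂ x) = negMulLog p₀ + negMulLog p₁ + negMulLog p₂ :=
  ZMod.sum_univ_three _

end ternaryLaw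

lemma sum_ternaryLaw_mul_sub (x : ZMod 3) :
    ∑ a, ternaryLaw (1/3) 0 (2/3) a * ternaryLaw (1/3) (2/3) 0 (x - a) =
      ternaryLaw (5/9) (2/9) (2/9) x := by
  obtain rfl | rfl | rfl := ZMod.eq_zero_or_one_or_two x <;>
    norm_num +decide [ZMod.sum_univ_three, ternaryLaw_apply]

lemma sum_ternaryLaw_mul_sub_two_mul (x : ZMod 3) :
    ∑ a, ternaryLaw (1/3) 0 (2/3) a * ternaryLaw (1/3) (2/3) 0 (x - 2 * a) =
      ternaryLaw (1/9) (4/9) (4/9) x := by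
  obtain rfl | rfl | rfl := ZMod.eq_zero_or_one_or_two x <;>
    norm_num +decide [ZMod.sum_univ_three, ternaryLaw_apply]

lemma five_mul_log_five_lt_twelve_mul_log_two : 5 * log 5 < 12 * log 2 := by
  have h := log_lt_log (by norm_num) (show (5 : ℝ) ^ 5 < 2 ^ 12 by norm_num)
  rw [log_pow, log_pow] at h
  exact_mod_cast h

lemma negMulLog_ninths_gap :
    (negMulLog (5/9) + negMulLog (2/9) + negMulLog (2/9)) -
      (negMulLog (1/9) + negMulLog (4/9) + negMulLog (4/9)) = (12 * log 2 - 5 * log 5) / 9 := by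
  have hlog4 : log 4 = 2 * log 2 := by
    rw [show (4 : ℝ) = 2 ^ 2 by norm_num, log_pow]; norm_num
  simp only [negMulLog, log_div (by norm_num : (5 : ℝ) ≠ 0) (by norm_num : (9 : ℝ) ≠ 0),
    log_div (by norm_num : (2 : ℝ) ≠ 0) (by norm_num : (9 : ℝ) ≠ 0),
    log_div (by norm_num : (1 : ℝ) ≠ 0) (by norm_num : (9 : ℝ) ≠ 0),
    log_div (by norm_num : (4 : ℝ) ≠ 0) (by norm_num : (9 : ℝ) ≠ 0), log_one, hlog4]
  ring

theorem exists_ternary_entropy_gap :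
    ∃ p₁ p₂ : ZMod 3 → ℝ,
      (∀ x, 0 ≤ p₁ x) ∧ (∀ x, 0 ≤ p₂ x) ∧ (∑ x, p₁ x) = 1 ∧ (∑ x, p₂ x) = 1 ∧
      p₁ 2 = 2/3 ∧ p₁ 0 = 1/3 ∧ p₂ 1 = 2/3 ∧ p₂ 0 = 1/3 ∧
      (∑ x : ZMod 3, Real.negMulLog (∑ a : ZMod 3, p₁ a * p₂ (x - a))) >
      (∑ x : ZMod 3, Real.negMulLog (∑ a : ZMod 3, p₁ a * p₂ (x - 2 * a))) := by
  refine ⟨ternaryLaw (1/3) 0 (2/3), ternaryLaw (1/3) (2/3) 0,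
    ternaryLaw_nonneg (by norm_num) le_rfl (by norm_num),
    ternaryLaw_nonneg (by norm_num) (by norm_num) le_rfl,
    by rw [sum_ternaryLaw]; norm_num, by rw [sum_ternaryLaw]; norm_num,
    rfl, rfl, rfl, rfl, ?_⟩
  simp only [sum_ternaryLaw_mul_sub, sum_ternaryLaw_mul_sub_two_mul, sum_negMulLog_ternaryLaw]
  linarith [negMulLog_ninths_gap, five_mul_log_five_lt_twelve_mul_log_two]
end
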